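/- arXiv:1911.12293 — 6 statements merged into one kernel-verified Lean document; each statement's English description precedes it below -/
import Mathlib

section
/- Let F ∈ ℝ^{n×n}, S ∈ ℝ^{n_s×n}, and suppose there exists a matrix P ∈ ℝ^{n_s×n_s} with all entries nonnegative such that P 𝟏 ≤ λ 𝟏 (componentwise) and P S = S F. Define V(x) = max_i |(S x)_i|. Then for every x ∈ ℝⁿ, V(F x) ≤ λ V(x). -/
/-- If `P ≥ 0` entrywise, `P 𝟏 ≤ λ 𝟏` and `P S = S F`, then
`V (F x) ≤ λ V x` for all `x`, where `V x = ‖S x‖_∞`. -/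
theorem stmt2 (n ns : ℕ) (F : Matrix (Fin n) (Fin n) ℝ)
    (S : Matrix (Fin ns) (Fin n) ℝ) (P : Matrix (Fin ns) (Fin ns) ℝ)
    (lam : ℝ) (hlam : 0 ≤ lam)
    (hP : ∀ i j, 0 ≤ P i j)
    (hrow : ∀ i, ∑ j, P i j ≤ lam)
    (hPS : P * S = S * F) :
    ∀ x : Fin n → ℝ, ‖S.mulVec (F.mulVec x)‖ ≤ lam * ‖S.mulVec x‖ := by
  intro x
  have key : S.mulVec (F.mulVec x) = P.mulVec (S.mulVec x) := by
    rw [Matrix.mulVec_mulVec, Matrix.mulVec_mulVec, hPS]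
  rw [key]
  set y := S.mulVec x with hy
  rw [pi_norm_le_iff_of_nonneg (by positivity)]
  intro i
  calc ‖P.mulVec y i‖ = |∑ j, P i j * y j| := rfl
    _ ≤ ∑ j, |P i j * y j| := Finset.abs_sum_le_sum_abs _ _
    _ ≤ ∑ j, P i j * ‖y‖ := by
        apply Finset.sum_le_sum
        intro j _
        rw [abs_mul, abs_of_nonneg (hP i j)]
        exact mul_le_mul_of_nonneg_left (norm_le_pi_norm y j) (hP i j)
    _ = (∑ j, P i j) * ‖y‖ := by rw [Finset.sum_mul]
    _ ≤ lam * ‖y‖ := mul_le_mul_of_nonneg_right (hrow i) (norm_nonneg y)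
end

section
/- With the hypotheses of the previous setting (P ≥ 0 entrywise, P 𝟏 ≤ λ 𝟏, P S = S F, and λ ∈ [0,1)), every solution of x⁺ = F x with x(0) ∈ 𝒮 = {x : S x ≤ 𝟏} satisfies S x(t) ≤ λᵗ 𝟏 for all t ∈ ℕ; in particular x(t) ∈ 𝒮 for all t, i.e., 𝒮 is invariant. -/
/-- Under the contractivity certificate (`P ≥ 0`, `P 𝟏 ≤ λ 𝟏`, `P S = S F`,
`0 ≤ λ < 1`), every solution of `x⁺ = F x` starting in `𝒮 = {x : S x ≤ 𝟏}`
satisfies `S x(t) ≤ λᵗ 𝟏`, and in particular stays in `𝒮`. -/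
theorem stmt3 (n ns : ℕ) (F : Matrix (Fin n) (Fin n) ℝ)
    (S : Matrix (Fin ns) (Fin n) ℝ) (P : Matrix (Fin ns) (Fin ns) ℝ)
    (lam : ℝ) (hlam0 : 0 ≤ lam) (hlam1 : lam < 1)
    (hP : ∀ i j, 0 ≤ P i j)
    (hrow : ∀ i, ∑ j, P i j ≤ lam)
    (hPS : P * S = S * F)
    (x : ℕ → Fin n → ℝ)
    (hdyn : ∀ t, x (t + 1) = F.mulVec (x t))
    (hx0 : ∀ i, S.mulVec (x 0) i ≤ 1) :
    ∀ t, (∀ i, S.mulVec (x t) i ≤ lam ^ t) ∧ (∀ i, S.mulVec (x t) i ≤ 1) := by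
  have key : ∀ t, ∀ i, S.mulVec (x t) i ≤ lam ^ t := by
    intro t
    induction t with
    | zero => simpa using hx0
    | succ t ih =>
      intro i
      have hS : S.mulVec (x (t + 1)) = P.mulVec (S.mulVec (x t)) := by
        rw [hdyn, Matrix.mulVec_mulVec, ← hPS, ← Matrix.mulVec_mulVec]
      rw [hS]
      have : P.mulVec (S.mulVec (x t)) i ≤ ∑ j, P i j * lam ^ t := by
        rw [Matrix.mulVec, dotProduct]
        apply Finset.sum_le_sum
        intro j _
        exact mul_le_mul_of_nonneg_left (ih j) (hP i j)
      refine this.trans ?_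
      rw [← Finset.sum_mul, pow_succ']
      exact mul_le_mul_of_nonneg_right (hrow i) (pow_nonneg hlam0 t)
  intro t
  exact ⟨key t, fun i => (key t i).trans (pow_le_one₀ hlam0 hlam1.le)⟩
end

section
/- Suppose there exists an entrywise nonnegative matrix P with P 𝟏 ≤ λ 𝟏 and P S = S F, where 0 ≤ λ < 1 and S has rank n. Then for every x(0) ∈ ℝⁿ, the solution of x(t+1) = F x(t) converges to 0 as t → ∞. -/
lemma mulVec_norm_le (ns : ℕ) (P : Matrix (Fin ns) (Fin ns) ℝ) (lam : ℝ)
    (hlam0 : 0 ≤ lam) (hP : ∀ i j, 0 ≤ P i j) (hrow : ∀ i, ∑ j, P i j ≤ lam)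
    (v : Fin ns → ℝ) : ‖P.mulVec v‖ ≤ lam * ‖v‖ := by
  have hnn : 0 ≤ lam * ‖v‖ := mul_nonneg hlam0 (norm_nonneg v)
  rw [pi_norm_le_iff_of_nonneg hnn]
  intro i
  have h1 : ‖P.mulVec v i‖ ≤ ∑ j, P i j * ‖v j‖ := by
    simp only [Matrix.mulVec, dotProduct]
    refine (norm_sum_le _ _).trans ?_
    refine Finset.sum_le_sum fun j _ => ?_
    rw [norm_mul, Real.norm_eq_abs (P i j), abs_of_nonneg (hP i j)]
  refine h1.trans ?_
  calc ∑ j, P i j * ‖v j‖ ≤ ∑ j, P i j * ‖v‖ := by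
        refine Finset.sum_le_sum fun j _ => ?_
        exact mul_le_mul_of_nonneg_left (norm_le_pi_norm v j) (hP i j)
    _ = (∑ j, P i j) * ‖v‖ := by rw [Finset.sum_mul]
    _ ≤ lam * ‖v‖ := mul_le_mul_of_nonneg_right (hrow i) (norm_nonneg v)

/-- Under the contractivity certificate with `S` of rank `n`, every solution
of `x⁺ = F x` converges to the origin. -/
theorem stmt4 (n ns : ℕ) (F : Matrix (Fin n) (Fin n) ℝ)
    (S : Matrix (Fin ns) (Fin n) ℝ) (P : Matrix (Fin ns) (Fin ns) ℝ)
    (lam : ℝ) (hlam0 : 0 ≤ lam) (hlam1 : lam < 1)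
    (hrank : S.rank = n)
    (hP : ∀ i j, 0 ≤ P i j)
    (hrow : ∀ i, ∑ j, P i j ≤ lam)
    (hPS : P * S = S * F)
    (x : ℕ → Fin n → ℝ)
    (hdyn : ∀ t, x (t + 1) = F.mulVec (x t)) :
    Filter.Tendsto x Filter.atTop (nhds 0) := by
  -- S is injective
  have hker : LinearMap.ker S.mulVecLin = ⊥ := by
    have h := LinearMap.finrank_range_add_finrank_ker S.mulVecLin
    rw [Module.finrank_fin_fun] at h
    have hr : Module.finrank ℝ (LinearMap.range S.mulVecLin) = n := hrank
    have : Module.finrank ℝ (LinearMap.ker S.mulVecLin) = 0 := by omega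
    exact Submodule.finrank_eq_zero.mp this
  obtain ⟨g, hg⟩ := S.mulVecLin.exists_leftInverse_of_injective hker
  -- the observed sequence
  set y : ℕ → Fin ns → ℝ := fun t => S.mulVec (x t) with hy
  have hstep : ∀ t, y (t + 1) = P.mulVec (y t) := by
    intro t
    simp only [hy, hdyn t, ← Matrix.mulVec_mulVec, ← hPS, Matrix.mulVec_mulVec]
  have hbound : ∀ t, ‖y t‖ ≤ lam ^ t * ‖y 0‖ := by
    intro t
    induction t with
    | zero => simp
    | succ t ih =>
      rw [hstep t]
      calc ‖P.mulVec (y t)‖ ≤ lam * ‖y t‖ :=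
            mulVec_norm_le ns P lam hlam0 hP hrow (y t)
        _ ≤ lam * (lam ^ t * ‖y 0‖) :=
            mul_le_mul_of_nonneg_left ih hlam0
        _ = lam ^ (t + 1) * ‖y 0‖ := by ring
  have hy0 : Filter.Tendsto y Filter.atTop (nhds 0) := by
    rw [tendsto_zero_iff_norm_tendsto_zero]
    refine squeeze_zero (fun t => norm_nonneg _) hbound ?_
    have : Filter.Tendsto (fun t : ℕ => lam ^ t) Filter.atTop (nhds 0) :=
      tendsto_pow_atTop_nhds_zero_of_lt_one hlam0 hlam1
    simpa using this.mul_const ‖y 0‖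
  -- recover x via the continuous left inverse
  have hx : ∀ t, x t = g (y t) := by
    intro t
    have := LinearMap.congr_fun hg (x t)
    simpa [Matrix.mulVecLin] using this.symm
  have hgc : Continuous g := g.continuous_of_finiteDimensional
  have : Filter.Tendsto (fun t => g (y t)) Filter.atTop (nhds (g 0)) :=
    (hgc.tendsto 0).comp hy0
  simpa [map_zero, funext hx] using this
end

section
/- Let X₁ = A X₀ + B U (data consistency) and suppose the stacked matrix Θ = [U; X₀] ∈ ℝ^{(m+n)×T} has full row rank. Then for every K ∈ ℝ^{m×n} there exists G ∈ ℝ^{T×n} with U G = K and X₀ G = Iₙ; moreover any such G satisfies A + B K = X₁ G. -/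
/-- If `X₁ = A X₀ + B U` and `Θ = [U; X₀]` has full row rank, then every gain
`K` admits a data-based representation: there is `G` with `U G = K` and
`X₀ G = I`, and any such `G` satisfies `A + B K = X₁ G`. -/
theorem stmt6 (n m T : ℕ)
    (A : Matrix (Fin n) (Fin n) ℝ) (B : Matrix (Fin n) (Fin m) ℝ)
    (U : Matrix (Fin m) (Fin T) ℝ)
    (X0 X1 : Matrix (Fin n) (Fin T) ℝ)
    (hdata : X1 = A * X0 + B * U)
    (hrank : (Matrix.fromRows U X0).rank = m + n) :
    ∀ K : Matrix (Fin m) (Fin n) ℝ,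
      (∃ G : Matrix (Fin T) (Fin n) ℝ, U * G = K ∧ X0 * G = 1) ∧
      (∀ G : Matrix (Fin T) (Fin n) ℝ, U * G = K → X0 * G = 1 →
        A + B * K = X1 * G) := by
  intro K
  constructor
  · -- existence
    have hsurj : Function.Surjective (Matrix.fromRows U X0).mulVecLin := by
      rw [← LinearMap.range_eq_top]
      apply Submodule.eq_top_of_finrank_eq
      rw [← Matrix.rank, hrank]
      simp [Module.finrank_fintype_fun_eq_card]
    set F := Matrix.fromRows K (1 : Matrix (Fin n) (Fin n) ℝ) with hF
    choose g hg using fun j => hsurj (fun i => F i j)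
    set G : Matrix (Fin T) (Fin n) ℝ := Matrix.of fun t j => g j t with hG
    have hmul : Matrix.fromRows U X0 * G = F := by
      ext i j
      have := congrFun (hg j) i
      simpa [Matrix.mulVecLin, Matrix.mul_apply, Matrix.mulVec, dotProduct,
        hG] using this
    rw [Matrix.fromRows_mul] at hmul
    refine ⟨G, ?_, ?_⟩
    · ext i j; have := congrFun (congrFun hmul (Sum.inl i)) j; simpa [hF] using this
    · ext i j; have := congrFun (congrFun hmul (Sum.inr i)) j; simpa [hF] using this
  · intro G hU hX0
    subst hdata
    rw [Matrix.add_mul, Matrix.mul_assoc, Matrix.mul_assoc, hU, hX0, Matrix.mul_one]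
end

section
/- (Data-based sufficiency for λ-contractivity with input constraints.) Let X₁ = A X₀ + B U_d with data matrices as above. Suppose there exist G ∈ ℝ^{T×n} and an entrywise nonnegative P ∈ ℝ^{n_s×n_s} such that: (i) P 𝟏 ≤ λ 𝟏, (ii) P S = S X₁ G, (iii) Ū U_d G s ≤ 𝟏 for every vertex s of 𝒮, and (iv) X₀ G = Iₙ. Then K := U_d G satisfies: P S = S (A + B K), and Ū K x ≤ 𝟏 for all x ∈ 𝒮. -/
/-- Data-based sufficiency for λ-contractivity with input constraints:
if `G`, `P ≥ 0` satisfy `P 𝟏 ≤ λ 𝟏`, `P S = S X₁ G`, the input constraint at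
the vertices of `𝒮`, and `X₀ G = I`, then `K = U_d G` satisfies the
model-based certificate `P S = S (A + B K)` and `Ū K x ≤ 𝟏` on all of `𝒮`. -/
theorem stmt7 (n m T ns nu : ℕ)
    (A : Matrix (Fin n) (Fin n) ℝ) (B : Matrix (Fin n) (Fin m) ℝ)
    (Ud : Matrix (Fin m) (Fin T) ℝ)
    (X0 X1 : Matrix (Fin n) (Fin T) ℝ)
    (hdata : X1 = A * X0 + B * Ud)
    (S : Matrix (Fin ns) (Fin n) ℝ) (Ubar : Matrix (Fin nu) (Fin m) ℝ)
    (Vs : Finset (Fin n → ℝ))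
    (hS : {x : Fin n → ℝ | ∀ i, S.mulVec x i ≤ 1} = convexHull ℝ (Vs : Set (Fin n → ℝ)))
    (lam : ℝ) (hlam0 : 0 ≤ lam) (hlam1 : lam < 1)
    (G : Matrix (Fin T) (Fin n) ℝ) (P : Matrix (Fin ns) (Fin ns) ℝ)
    (hP : ∀ i j, 0 ≤ P i j)
    (hrow : ∀ i, ∑ j, P i j ≤ lam)
    (hPS : P * S = S * (X1 * G))
    (hinput : ∀ s ∈ Vs, ∀ i, Ubar.mulVec ((Ud * G).mulVec s) i ≤ 1)
    (hG : X0 * G = 1) :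
    P * S = S * (A + B * (Ud * G)) ∧
    ∀ x : Fin n → ℝ, (∀ i, S.mulVec x i ≤ 1) →
      ∀ i, Ubar.mulVec ((Ud * G).mulVec x) i ≤ 1 := by
  constructor
  · have : X1 * G = A + B * (Ud * G) := by
      rw [hdata, Matrix.add_mul, Matrix.mul_assoc A, hG, Matrix.mul_one, Matrix.mul_assoc]
    rw [hPS, this]
  · intro x hx i
    have hxh : x ∈ convexHull ℝ (Vs : Set (Fin n → ℝ)) := by rw [← hS]; exact hx
    set f : (Fin n → ℝ) →ₗ[ℝ] ℝ :=
      { toFun := fun y => Ubar.mulVec ((Ud * G).mulVec y) i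
        map_add' := by
          intro a b
          simp [Matrix.mulVec_add]
        map_smul' := by
          intro c a
          simp [Matrix.mulVec_smul] } with hf
    have hconv : Convex ℝ {y : Fin n → ℝ | f y ≤ 1} :=
      (convex_Iic (1 : ℝ)).linear_preimage f
    have hsub : (Vs : Set (Fin n → ℝ)) ⊆ {y | f y ≤ 1} := by
      intro s hs
      exact hinput s hs i
    exact convexHull_min hsub hconv hxh
end

section
/- (Robust data-based invariance, Proposition 10.) Let X₁ = A X₀ + B U_d + D₀ where each column of the unknown disturbance matrix D₀ ∈ ℝ^{n×T} lies in the polytope 𝒟 = conv{d⁽¹⁾, …, d⁽ⁿᵈ⁾}. For j ∈ {1,…,T} and i ∈ {1,…,n_d}, let δ_{ji} ∈ ℝ^{n×T} be the matrix that is zero except its j-th column equals T·d⁽ⁱ⁾. Suppose G ∈ ℝ^{T×n} satisfies: (i) S((X₁ − δ_{ji}) G s + w) ≤ 𝟏 for all vertices s of 𝒮, all vertices w of 𝒟, all j, i; (ii) Ū U_d G s ≤ 𝟏 for all vertices s of 𝒮; (iii) X₀ G = Iₙ. Then K := U_d G satisfies S((A + BK)s + w) ≤ 𝟏 and Ū K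 s ≤ 𝟏 for all vertices s of 𝒮 and w of 𝒟; hence 𝒮 is robustly invariant w.r.t. 𝒟 for x⁺ = (A+BK)x + d and K x ∈ 𝒰 for all x ∈ 𝒮. -/
private lemma stmt11_convex_le {p q : ℕ} (M : Matrix (Fin p) (Fin q) ℝ) (b : Fin p → ℝ) :
    Convex ℝ {x : Fin q → ℝ | ∀ i, M.mulVec x i ≤ b i} := by
  have h : {x : Fin q → ℝ | ∀ i, M.mulVec x i ≤ b i}
      = ⋂ i, {x : Fin q → ℝ | M.mulVec x i ≤ b i} := by
    ext x; simp
  rw [h]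
  refine convex_iInter fun i => ?_
  refine convex_halfSpace_le ⟨?_, ?_⟩ (b i)
  · intro x y; simp [Matrix.mulVec_add]
  · intro c x; simp [Matrix.mulVec_smul]

/-- Robust data-based invariance (Proposition 10): with noisy data
`X₁ = A X₀ + B U_d + D₀`, columns of the unknown `D₀` in the polytope
`𝒟 = conv{d⁽¹⁾,…,d⁽ⁿᵈ⁾}`, and `G` satisfying the robustified data-based
linear program, the gain `K = U_d G` renders `𝒮` robustly invariant
w.r.t. `𝒟` for `x⁺ = (A+BK)x + d` and admissible for `𝒰`. -/
theorem stmt11 (n m T ns nu nd : ℕ)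
    (A : Matrix (Fin n) (Fin n) ℝ) (B : Matrix (Fin n) (Fin m) ℝ)
    (Ud : Matrix (Fin m) (Fin T) ℝ)
    (X0 X1 D0 : Matrix (Fin n) (Fin T) ℝ)
    (dv : Fin nd → Fin n → ℝ)
    (hdata : X1 = A * X0 + B * Ud + D0)
    (hD0 : ∀ j : Fin T, (fun r => D0 r j) ∈ convexHull ℝ (Set.range dv))
    (S : Matrix (Fin ns) (Fin n) ℝ) (Ubar : Matrix (Fin nu) (Fin m) ℝ)
    (Vs : Finset (Fin n → ℝ))
    (hS : {x : Fin n → ℝ | ∀ i, S.mulVec x i ≤ 1} = convexHull ℝ (Vs : Set (Fin n → ℝ)))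
    (delta : Fin T → Fin nd → Matrix (Fin n) (Fin T) ℝ)
    (hdelta : ∀ j i, delta j i = Matrix.of fun r c => if c = j then (T : ℝ) * dv i r else 0)
    (G : Matrix (Fin T) (Fin n) ℝ)
    (h1 : ∀ s ∈ Vs, ∀ k : Fin nd, ∀ j : Fin T, ∀ i : Fin nd, ∀ r,
        S.mulVec (((X1 - delta j i) * G).mulVec s + dv k) r ≤ 1)
    (h2 : ∀ s ∈ Vs, ∀ i, Ubar.mulVec ((Ud * G).mulVec s) i ≤ 1)
    (h3 : X0 * G = 1) :
    (∀ s ∈ Vs, ∀ k : Fin nd, ∀ r,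
        S.mulVec ((A + B * (Ud * G)).mulVec s + dv k) r ≤ 1) ∧
    (∀ x ∈ {x : Fin n → ℝ | ∀ i, S.mulVec x i ≤ 1},
      ∀ d ∈ convexHull ℝ (Set.range dv),
        (A + B * (Ud * G)).mulVec x + d ∈ {x : Fin n → ℝ | ∀ i, S.mulVec x i ≤ 1}) ∧
    (∀ x ∈ {x : Fin n → ℝ | ∀ i, S.mulVec x i ≤ 1},
        ∀ i, Ubar.mulVec ((Ud * G).mulVec x) i ≤ 1) := by
  rcases Nat.eq_zero_or_pos n with hn | hn
  · -- degenerate case: the state space is trivial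
    subst hn
    refine ⟨?_, ?_, ?_⟩
    · intro s _ k r
      simp [Matrix.mulVec, dotProduct]
    · intro x _ d _
      simp only [Set.mem_setOf_eq]
      intro i
      simp [Matrix.mulVec, dotProduct]
    · intro x _ i
      simp [Matrix.mulVec, dotProduct, Matrix.mul_apply]
  rcases Nat.eq_zero_or_pos T with hT | hT
  · -- impossible: X0 * G = 1 with T = 0 and n > 0
    exfalso
    subst hT
    have h := congrFun (congrFun h3 ⟨0, hn⟩) ⟨0, hn⟩
    simp [Matrix.mul_apply, Matrix.one_apply] at h
  have hT' : (0 : ℝ) < T := by exact_mod_cast hT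
  -- the closed-loop matrix equals (X1 - D0) * G
  have hKeq : A + B * (Ud * G) = (X1 - D0) * G := by
    have hx : X1 - D0 = A * X0 + B * Ud := by
      rw [hdata]; exact add_sub_cancel_right _ _
    rw [hx, Matrix.add_mul, Matrix.mul_assoc, Matrix.mul_assoc, h3, Matrix.mul_one]
  -- the linear "column insertion" maps
  let colMatL : Fin T → ((Fin n → ℝ) →ₗ[ℝ] Matrix (Fin n) (Fin T) ℝ) := fun j =>
    { toFun := fun d => Matrix.of fun r c => if c = j then d r else 0
      map_add' := by intro x y; ext r c; by_cases h : c = j <;> simp [h]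
      map_smul' := by intro cc x; ext r c; by_cases h : c = j <;> simp [h] }
  have hdeltaeq : ∀ j i, delta j i = (T : ℝ) • (colMatL j (dv i)) := by
    intro j i
    rw [hdelta]
    ext r c
    by_cases h : c = j <;> simp [colMatL, h]
  have hD0eq : D0 = ∑ j : Fin T, colMatL j (fun r => D0 r j) := by
    ext r c
    simp [colMatL, Matrix.sum_apply, Finset.sum_ite_eq]
  -- bullet 1 : invariance inequality at the vertices
  have B1 : ∀ s ∈ Vs, ∀ k : Fin nd, ∀ r,
      S.mulVec ((A + B * (Ud * G)).mulVec s + dv k) r ≤ 1 := by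
    intro s hs k r
    set L : Matrix (Fin n) (Fin T) ℝ →ₗ[ℝ] ℝ :=
      { toFun := fun M => S.mulVec ((M * G).mulVec s) r
        map_add' := by
          intro M N
          simp [Matrix.add_mul, Matrix.add_mulVec, Matrix.mulVec_add]
        map_smul' := by
          intro c M
          simp [Matrix.smul_mul, Matrix.smul_mulVec, Matrix.mulVec_smul] }
      with hLdef
    have hval : ∀ M : Matrix (Fin n) (Fin T) ℝ,
        S.mulVec ((M * G).mulVec s + dv k) r = L M + S.mulVec (dv k) r := by
      intro M
      simp [hLdef, Matrix.mulVec_add]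
    set e := S.mulVec (dv k) r with he
    set β := (L X1 + e - 1) / T with hβdef
    have hβ : ∀ j : Fin T, ∀ d ∈ convexHull ℝ (Set.range dv), β ≤ L (colMatL j d) := by
      intro j
      have hconv : Convex ℝ {d : Fin n → ℝ | β ≤ L (colMatL j d)} := by
        refine convex_halfSpace_ge ⟨?_, ?_⟩ β
        · intro x y; simp
        · intro c x; simp
      refine convexHull_min ?_ hconv
      rintro d ⟨i, rfl⟩
      have h := h1 s hs k j i r
      rw [hval] at h
      rw [map_sub, hdeltaeq j i, map_smul, smul_eq_mul] at h
      -- h : L X1 - T * L (colMatL j (dv i)) + e ≤ 1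
      show β ≤ L (colMatL j (dv i))
      rw [hβdef, div_le_iff₀ hT']
      nlinarith [h]
    have hsum : (T : ℝ) * β ≤ L D0 := by
      have hLD0 : L D0 = ∑ j : Fin T, L (colMatL j (fun r => D0 r j)) := by
        conv_lhs => rw [hD0eq]
        exact map_sum L _ _
      have hterm : ∀ j : Fin T, β ≤ L (colMatL j (fun r => D0 r j)) :=
        fun j => hβ j _ (hD0 j)
      calc (T : ℝ) * β = ∑ _j : Fin T, β := by
            simp [Finset.sum_const, Finset.card_univ, nsmul_eq_mul]
        _ ≤ ∑ j : Fin T, L (colMatL j (fun r => D0 r j)) :=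
            Finset.sum_le_sum fun j _ => hterm j
        _ = L D0 := hLD0.symm
    have hTβ : (T : ℝ) * β = L X1 + e - 1 := by
      rw [hβdef]; field_simp
    rw [hKeq, hval, map_sub]
    linarith [hsum]
  refine ⟨B1, ?_, ?_⟩
  · -- bullet 2 : robust invariance on the whole polytope
    intro x hx d hd
    have hx' : x ∈ convexHull ℝ (Vs : Set (Fin n → ℝ)) := hS ▸ hx
    -- first extend B1 from vertices s to all x ∈ 𝒮, for vertex disturbances
    have B2a : ∀ k : Fin nd, ∀ r, S.mulVec ((A + B * (Ud * G)).mulVec x + dv k) r ≤ 1 := by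
      intro k
      have hsub : (Vs : Set (Fin n → ℝ)) ⊆
          {y : Fin n → ℝ | ∀ r, (S * (A + B * (Ud * G))).mulVec y r ≤ 1 - S.mulVec (dv k) r} := by
        intro s hs r
        have h := B1 s hs k r
        rw [Matrix.mulVec_add, Pi.add_apply, Matrix.mulVec_mulVec] at h
        linarith
      have h := convexHull_min hsub (stmt11_convex_le _ _) hx'
      intro r
      have h' := h r
      rw [Matrix.mulVec_add, Pi.add_apply, Matrix.mulVec_mulVec]
      linarith
    -- then extend from vertex disturbances to all d ∈ 𝒟
    have hsub : Set.range dv ⊆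
        {d : Fin n → ℝ | ∀ r, S.mulVec d r ≤ 1 - S.mulVec ((A + B * (Ud * G)).mulVec x) r} := by
      rintro d ⟨k, rfl⟩ r
      have h := B2a k r
      rw [Matrix.mulVec_add, Pi.add_apply] at h
      linarith
    have h := convexHull_min hsub (stmt11_convex_le _ _) hd
    intro r
    have h' := h r
    rw [Matrix.mulVec_add, Pi.add_apply]
    linarith
  · -- bullet 3 : input constraints on the whole polytope
    intro x hx i
    have hx' : x ∈ convexHull ℝ (Vs : Set (Fin n → ℝ)) := hS ▸ hx
    have hsub : (Vs : Set (Fin n → ℝ)) ⊆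
        {y : Fin n → ℝ | ∀ i, (Ubar * (Ud * G)).mulVec y i ≤ 1} := by
      intro s hs i
      have h := h2 s hs i
      rw [Matrix.mulVec_mulVec] at h
      exact h
    have h := convexHull_min hsub (stmt11_convex_le _ (fun _ => 1)) hx' i
    rw [Matrix.mulVec_mulVec]
    exact h
end
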